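/- On a parallelogram with side a parallel to the x-axis, side b, and angle θ, the energy of the bilinear hourglass mode with general constant symmetric diffusion κ equals τ = (a²κ₂₂ + b²κ₁₁)/(3ab sinθ) + b((κ₂₂ − κ₁₁)cos²θ − 2κ₁₂ cosθ sinθ)/(3a sinθ). -/

import Mathlib

open MeasureTheory Real

/-- Gradient of a function on ℝ² as a pair. -/
noncomputable def grad (f : ℝ × ℝ → ℝ) (p : ℝ × ℝ) : ℝ × ℝ :=
  (fderiv ℝ f p (1, 0), fderiv ℝ f p (0, 1))

/-- The bilinear form `w ↦ z ↦ (κ w) · z` for the symmetric matrix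
`κ = [[k11,k12],[k12,k22]]`. -/
def kform (k11 k12 k22 : ℝ) (w z : ℝ × ℝ) : ℝ :=
  (k11 * w.1 + k12 * w.2) * z.1 + (k12 * w.1 + k22 * w.2) * z.2

/-!
Pulled back to the reference square, `Ψh = ĥ ∘ F⁻¹` with the hourglass mode
`ĥ(ξ, η) = (ξ - 1/2)(1 - 2η)`, whose gradient is `(1 - 2η, 1 - 2ξ)`. By the chain rule
`∇Ψh ∘ F = F⁻ᵀ ∇ĥ`, and the change of variables `x = F w` turns `τ` into
`|det F| ∫_{[0,1]²} κ F⁻ᵀ∇ĥ · F⁻ᵀ∇ĥ`. Since `∫₀¹ (1 - 2t)² = 1/3` and `∫₀¹ (1 - 2t) = 0`, the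
mixed term drops out and `τ = (ab sin θ / 3) · tr(F⁻¹ κ F⁻ᵀ)`, which expands to the stated formula.
-/

open Set

theorem integral_Icc_one_sub_two_mul : ∫ x in Icc (0 : ℝ) 1, (1 - 2 * x) = 0 := by
  rw [integral_Icc_eq_integral_Ioc, ← intervalIntegral.integral_of_le zero_le_one,
    intervalIntegral.integral_comp_sub_mul (fun x => x) two_ne_zero]
  norm_num

theorem integral_Icc_one_sub_two_mul_sq : ∫ x in Icc (0 : ℝ) 1, (1 - 2 * x) ^ 2 = 1 / 3 := by
  rw [integral_Icc_eq_integral_Ioc, ← intervalIntegral.integral_of_le zero_le_one,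
    intervalIntegral.integral_comp_sub_mul (fun x => x ^ 2) two_ne_zero]
  norm_num

theorem setIntegral_Icc_prod_mul (f g : ℝ → ℝ) (a b c d : ℝ) :
    ∫ w in Icc (a, c) (b, d), f w.1 * g w.2 = (∫ x in Icc a b, f x) * ∫ y in Icc c d, g y := by
  rw [← Icc_prod_Icc, Measure.volume_eq_prod, setIntegral_prod_mul]

theorem kform_add_smul_self (k11 k12 k22 x y : ℝ) (g h : ℝ × ℝ) :
    kform k11 k12 k22 (x • g + y • h) (x • g + y • h) =
      x ^ 2 * kform k11 k12 k22 g g + y * x * (2 * kform k11 k12 k22 g h) +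
        y ^ 2 * kform k11 k12 k22 h h := by
  simp only [kform, Prod.fst_add, Prod.snd_add, Prod.smul_fst, Prod.smul_snd, smul_eq_mul]
  ring

/-- The hourglass mode `½(-φ̂₁ + φ̂₂ - φ̂₃ + φ̂₄)` of the reference square `[0,1]²`. -/
noncomputable def hourglass (w : ℝ × ℝ) : ℝ := (w.1 - 1 / 2) * (1 - 2 * w.2)

theorem hasFDerivAt_hourglass (w : ℝ × ℝ) :
    HasFDerivAt hourglass
      ((1 - 2 * w.2) • ContinuousLinearMap.fst ℝ ℝ ℝ +
        (1 - 2 * w.1) • ContinuousLinearMap.snd ℝ ℝ ℝ) w := by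
  have hsnd : HasFDerivAt (Prod.snd : ℝ × ℝ → ℝ) (ContinuousLinearMap.snd ℝ ℝ ℝ) w :=
    hasFDerivAt_snd
  have hprod := (hasFDerivAt_fst.sub_const (1 / 2 : ℝ)).mul ((hsnd.const_mul (2 : ℝ)).const_sub 1)
  refine hprod.congr_fderiv ?_
  ext
  · simp
  · simp [mul_sub, mul_comm]

theorem integral_unitSquare_kform_hourglass (k11 k12 k22 : ℝ) (g h : ℝ × ℝ) :
    ∫ w in Icc ((0 : ℝ), (0 : ℝ)) (1, 1),
        kform k11 k12 k22 ((1 - 2 * w.2) • g + (1 - 2 * w.1) • h)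
          ((1 - 2 * w.2) • g + (1 - 2 * w.1) • h) =
      (kform k11 k12 k22 g g + kform k11 k12 k22 h h) / 3 := by
  have hsq₂ := setIntegral_Icc_prod_mul (fun _ => 1) (fun y => (1 - 2 * y) ^ 2) 0 1 0 1
  have hmix := setIntegral_Icc_prod_mul (fun x => 1 - 2 * x) (fun y => 1 - 2 * y) 0 1 0 1
  have hsq₁ := setIntegral_Icc_prod_mul (fun x => (1 - 2 * x) ^ 2) (fun _ => 1) 0 1 0 1
  simp only [one_mul, mul_one, integral_Icc_one_sub_two_mul, integral_Icc_one_sub_two_mul_sq,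
    setIntegral_const, Real.volume_real_Icc] at hsq₂ hmix hsq₁
  simp_rw [kform_add_smul_self]
  rw [integral_add, integral_add, integral_mul_const, integral_mul_const, integral_mul_const,
    hsq₂, hmix, hsq₁]
  · norm_num
    ring
  all_goals exact Continuous.integrableOn_Icc (by fun_prop)

theorem setIntegral_image_continuousLinearMap {E : Type*} [NormedAddCommGroup E]
    [NormedSpace ℝ E] [FiniteDimensional ℝ E] [MeasurableSpace E] [BorelSpace E]
    {F : Type*} [NormedAddCommGroup F] [NormedSpace ℝ F]
    (μ : Measure E) [μ.IsAddHaarMeasure] (L : E →L[ℝ] E) (hL : Function.Injective L)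
    {s : Set E} (hs : MeasurableSet s) (f : E → F) :
    ∫ x in L '' s, f x ∂μ = |L.det| • ∫ x in s, f (L x) ∂μ := by
  rw [integral_image_eq_integral_abs_det_fderiv_smul μ hs
    (fun x _ => L.hasFDerivAt.hasFDerivWithinAt) hL.injOn, integral_smul]

theorem grad_comp_continuousLinearMap {f : ℝ × ℝ → ℝ} (G : ℝ × ℝ →L[ℝ] ℝ × ℝ) {p : ℝ × ℝ}
    (hf : DifferentiableAt ℝ f (G p)) :
    grad (f ∘ G) p = (fderiv ℝ f (G p) (G (1, 0)), fderiv ℝ f (G p) (G (0, 1))) := by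
  simp only [grad, fderiv_comp p hf G.differentiableAt, G.fderiv,
    ContinuousLinearMap.coe_comp, Function.comp_apply]

theorem grad_hourglass_comp (G : ℝ × ℝ →L[ℝ] ℝ × ℝ) (p : ℝ × ℝ) :
    grad (hourglass ∘ G) p =
      (1 - 2 * (G p).2) • ((G (1, 0)).1, (G (0, 1)).1) +
        (1 - 2 * (G p).1) • ((G (1, 0)).2, (G (0, 1)).2) := by
  rw [grad_comp_continuousLinearMap G (hasFDerivAt_hourglass _).differentiableAt,
    (hasFDerivAt_hourglass _).fderiv]
  ext <;> simp

theorem integral_image_kform_grad_hourglass (k11 k12 k22 : ℝ) (F G : ℝ × ℝ →L[ℝ] ℝ × ℝ)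
    (hGF : Function.LeftInverse G F) :
    ∫ p in F '' Icc ((0 : ℝ), (0 : ℝ)) (1, 1),
        kform k11 k12 k22 (grad (hourglass ∘ G) p) (grad (hourglass ∘ G) p) =
      |F.det| * (kform k11 k12 k22 ((G (1, 0)).1, (G (0, 1)).1) ((G (1, 0)).1, (G (0, 1)).1) +
        kform k11 k12 k22 ((G (1, 0)).2, (G (0, 1)).2) ((G (1, 0)).2, (G (0, 1)).2)) / 3 := by
  rw [setIntegral_image_continuousLinearMap volume F hGF.injective measurableSet_Icc,
    smul_eq_mul, mul_div_assoc, ← integral_unitSquare_kform_hourglass]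
  simp only [grad_hourglass_comp, hGF _]

theorem hourglass_energy_parallelogram_general_general
    (a b θ : ℝ) (ha : 0 < a) (hb : 0 < b) (hθ : θ ∈ Set.Ioo 0 π)
    (k11 k12 k22 : ℝ)
    (F : ℝ × ℝ → ℝ × ℝ)
    (hF : ∀ w : ℝ × ℝ, F w = (a * w.1 + b * Real.cos θ * w.2, b * Real.sin θ * w.2))
    (φ : Fin 4 → ℝ × ℝ → ℝ)
    -- the Q1 reference shape functions on [0,1]², transported by F
    (hφ0 : ∀ w : ℝ × ℝ, φ 0 (F w) = (1 - w.1) * (1 - w.2))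
    (hφ1 : ∀ w : ℝ × ℝ, φ 1 (F w) = w.1 * (1 - w.2))
    (hφ2 : ∀ w : ℝ × ℝ, φ 2 (F w) = w.1 * w.2)
    (hφ3 : ∀ w : ℝ × ℝ, φ 3 (F w) = (1 - w.1) * w.2)
    (Ψh : ℝ × ℝ → ℝ)
    (hΨ : ∀ p, Ψh p = (1 / 2) * (-φ 0 p + φ 1 p - φ 2 p + φ 3 p))
    (τ : ℝ)
    (hτ : τ = ∫ p in F '' Set.Icc ((0 : ℝ), (0 : ℝ)) (1, 1),
      kform k11 k12 k22 (grad Ψh p) (grad Ψh p)) :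
    τ = (a ^ 2 * k22 + b ^ 2 * k11) / (3 * a * b * Real.sin θ) +
      b * ((k22 - k11) * Real.cos θ ^ 2 - 2 * k12 * Real.cos θ * Real.sin θ) /
        (3 * a * Real.sin θ) := by
  have hs : 0 < sin θ := sin_pos_of_pos_of_lt_pi hθ.1 hθ.2
  set L := (Matrix.toLin (.finTwoProd ℝ) (.finTwoProd ℝ)
    !![a, b * cos θ; 0, b * sin θ]).toContinuousLinearMap
  set G := (Matrix.toLin (.finTwoProd ℝ) (.finTwoProd ℝ)
    !![1 / a, -cos θ / (a * sin θ); 0, 1 / (b * sin θ)]).toContinuousLinearMap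
  have hFL : F = L := funext fun w => by
    simp only [hF, L, LinearMap.coe_toContinuousLinearMap', Matrix.toLin_finTwoProd_apply,
      zero_mul, zero_add]
  have hLG : Function.RightInverse G L := fun p => by
    simp only [L, G, LinearMap.coe_toContinuousLinearMap', Matrix.toLin_finTwoProd_apply]
    ext <;> field_simp <;> ring
  have hGL : Function.LeftInverse G L := fun w => by
    simp only [L, G, LinearMap.coe_toContinuousLinearMap', Matrix.toLin_finTwoProd_apply]
    ext <;> field_simp <;> ring
  have hΨG : Ψh = hourglass ∘ G := funext fun p => by
    obtain ⟨w, rfl⟩ := hLG.surjective p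
    rw [Function.comp_apply, hGL, hΨ, ← hFL, hφ0, hφ1, hφ2, hφ3, hourglass]
    ring
  have hdet : L.det = a * (b * sin θ) := by
    rw [LinearMap.det_toContinuousLinearMap, LinearMap.det_toLin, Matrix.det_fin_two_of]
    ring
  rw [hτ, hΨG, hFL, integral_image_kform_grad_hourglass k11 k12 k22 L G hGL, hdet,
    abs_of_pos (by positivity)]
  simp only [G, kform, LinearMap.coe_toContinuousLinearMap', Matrix.toLin_finTwoProd_apply]
  field_simp
  linear_combination (b ^ 2 * k11) * sin_sq_add_cos_sq θ

/-- on the parallelogram spanned by `u = (a,0)` and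
`v = (b cosθ, b sinθ)` with `θ ∈ (0,π)`, the energy of the bilinear hourglass
mode for a general constant symmetric diffusion `κ` equals
`τ = (a²κ₂₂ + b²κ₁₁)/(3ab sinθ) + b((κ₂₂ − κ₁₁)cos²θ − 2κ₁₂ cosθ sinθ)/(3a sinθ)`. -/
theorem hourglass_energy_parallelogram_general
    (a b θ : ℝ) (ha : 0 < a) (hb : 0 < b) (hθ : θ ∈ Set.Ioo 0 π)
    (k11 k12 k22 : ℝ)
    (F : ℝ × ℝ → ℝ × ℝ)
    (hF : ∀ w : ℝ × ℝ, F w = (a * w.1 + b * Real.cos θ * w.2, b * Real.sin θ * w.2))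
    (φ : Fin 4 → ℝ × ℝ → ℝ)
    -- the Q1 reference shape functions on [0,1]², transported by F
    (hφ0 : ∀ w : ℝ × ℝ, φ 0 (F w) = (1 - w.1) * (1 - w.2))
    (hφ1 : ∀ w : ℝ × ℝ, φ 1 (F w) = w.1 * (1 - w.2))
    (hφ2 : ∀ w : ℝ × ℝ, φ 2 (F w) = w.1 * w.2)
    (hφ3 : ∀ w : ℝ × ℝ, φ 3 (F w) = (1 - w.1) * w.2)
    (hφdiff : ∀ i : Fin 4, Differentiable ℝ (φ i))
    (Ψh : ℝ × ℝ → ℝ)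
    (hΨ : ∀ p, Ψh p = (1 / 2) * (-φ 0 p + φ 1 p - φ 2 p + φ 3 p))
    (τ : ℝ)
    (hτ : τ = ∫ p in F '' Set.Icc ((0:ℝ), (0:ℝ)) (1, 1),
      kform k11 k12 k22 (grad Ψh p) (grad Ψh p)) :
    τ = (a ^ 2 * k22 + b ^ 2 * k11) / (3 * a * b * Real.sin θ) +
      b * ((k22 - k11) * Real.cos θ ^ 2 - 2 * k12 * Real.cos θ * Real.sin θ) /
        (3 * a * Real.sin θ) :=
  hourglass_energy_parallelogram_general_general a b θ ha hb hθ k11 k12 k22 F hF φ hφ0 hφ1 hφ2 hφ3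
    Ψh hΨ τ hτ
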